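/- Reciprocal logarithmic cosine inequality (key inequality in the proof of the asymptotic bound for N_tv): for every real number Δθ with -π < Δθ < π and Δθ ≠ 0, one has 1 / Real.log ((Real.cos (Δθ/2))^2) ≥ -4 / Δθ². -/

import Mathlib

/-!
With `y = Δθ / 2` the claim is `log (cos² y) ≤ -y²`, i.e. the Gaussian bound
`cos y ≤ exp (-y² / 2)` on `|y| < π / 2`. It follows from
`cos y = 1 - 2 sin² (y / 2) ≤ (1 - y² / 4)²`, a consequence of `sin t ≥ t - t³ / 6`,
together with `1 - y² / 4 ≤ exp (-y² / 4)`.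
-/

open Real

lemma sq_sub_pow_four_div_two_le_sin_sq {t : ℝ} (ht : t ^ 2 ≤ 6) :
    t ^ 2 - t ^ 4 / 2 ≤ sin t ^ 2 := by
  wlog h : 0 ≤ t generalizing t
  · simpa [Even.neg_pow (by decide : Even 4)] using
      this (t := -t) (by simpa using ht) (by linarith)
  have hcube : 0 ≤ t - t ^ 3 / 6 := by nlinarith
  have := pow_le_pow_left₀ hcube (sin_ge_sub_cube h) 2
  nlinarith [pow_nonneg h 4, pow_nonneg h 6]

lemma cos_le_sq_one_sub_sq_div_four {x : ℝ} (hx : x ^ 2 ≤ 24) :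
    cos x ≤ (1 - x ^ 2 / 4) ^ 2 := by
  have hsin := sq_sub_pow_four_div_two_le_sin_sq (t := x / 2) (by nlinarith)
  have hcos : cos x = 1 - 2 * sin (x / 2) ^ 2 := by
    have := cos_two_mul (x / 2)
    rw [two_mul, add_halves] at this
    linarith [sin_sq_add_cos_sq (x / 2)]
  rw [hcos]
  nlinarith

lemma cos_le_exp_neg_sq_div_two {x : ℝ} (hx : |x| ≤ 2) : cos x ≤ exp (-(x ^ 2 / 2)) := by
  have hx4 : x ^ 2 ≤ 4 := by nlinarith [sq_abs x, abs_nonneg x]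
  calc cos x ≤ (1 - x ^ 2 / 4) ^ 2 := cos_le_sq_one_sub_sq_div_four (by linarith)
    _ ≤ exp (-(x ^ 2 / 4)) ^ 2 :=
      pow_le_pow_left₀ (by linarith) (by linarith [add_one_le_exp (-(x ^ 2 / 4))]) 2
    _ = exp (-(x ^ 2 / 2)) := by rw [← exp_nat_mul]; ring_nf

lemma log_cos_le_neg_sq_div_two {x : ℝ} (hx : |x| < π / 2) : log (cos x) ≤ -(x ^ 2 / 2) :=
  (log_le_iff_le_exp (cos_pos_of_mem_Ioo (abs_lt.mp hx))).mpr
    (cos_le_exp_neg_sq_div_two (hx.le.trans (by linarith [pi_le_four])))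

/-- Reciprocal logarithmic cosine inequality: for every real `Δθ` with
`-π < Δθ < π` and `Δθ ≠ 0`, `1 / log (cos²(Δθ/2)) ≥ -4 / Δθ²`. -/
theorem one_div_log_cos_sq_ge (Δθ : ℝ) (h1 : -Real.pi < Δθ) (h2 : Δθ < Real.pi)
    (h0 : Δθ ≠ 0) :
    1 / Real.log ((Real.cos (Δθ / 2)) ^ 2) ≥ -4 / Δθ ^ 2 := by
  have hlog : log (cos (Δθ / 2) ^ 2) ≤ -(Δθ ^ 2 / 4) := by
    have := log_cos_le_neg_sq_div_two (x := Δθ / 2) (by rw [abs_lt]; constructor <;> linarith)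
    rw [log_pow]
    linarith
  have hneg : -(Δθ ^ 2 / 4) < 0 := neg_neg_of_pos (by positivity)
  calc -4 / Δθ ^ 2 = 1 / -(Δθ ^ 2 / 4) := by field_simp
    _ ≤ 1 / log (cos (Δθ / 2) ^ 2) := one_div_le_one_div_of_neg_of_le hneg hlog
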